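/- arXiv:2009.04213 — 5 statements merged into one kernel-verified Lean document; each statement's English description precedes it below -/
import Mathlib

section
/- Let N be a positive integer, r ∈ {0,...,N}, and let S_r = {w ∈ ℝ^N : ‖w‖₀ ≤ r} be the set of r-sparse vectors. For any vector v ∈ ℝ^N, let T_r(v) ⊆ {1,...,N} be an index set of r largest-in-absolute-value entries of v. Then for all v' ∈ ℝ^N: ‖v'−v‖₁ − 2‖(v'−v)_{T_r(v)}‖₁ ≤ ‖v'‖₁ − ‖v‖₁ + 2·inf_{w ∈ S_r} ‖w−v‖₁, where subscripting by an index set denotes the subvector of the corresponding entries. -/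
/-!
On the index set `T` of the `r` largest entries of `v`, the triangle inequality gives
`-|v' - v| ≤ |v'| - |v|`, and off `T` it gives `|v' - v| ≤ |v'| + |v|`; summing, the left-hand
side is at most `‖v'‖₁ - ‖v‖₁ + 2 ‖v_{Tᶜ}‖₁`. An `r`-sparse `w` vanishes off its support `S`,
so `‖w - v‖₁` is at least the mass of `v` outside `S`, which is at least its mass outside `T`
because `T` carries the `r` largest entries; hence `‖v_{Tᶜ}‖₁` is below the infimum.
-/

open Finset

namespace Finset

variable {ι M : Type*} [DecidableEq ι] [AddCommMonoid M] [LinearOrder M] [IsOrderedAddMonoid M]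

theorem sum_le_sum_of_card_le_of_forall_le {f : ι → M} (hf : ∀ i, 0 ≤ f i) {S T : Finset ι}
    (hT : ∀ i ∈ T, ∀ j ∉ T, f j ≤ f i) (hST : #S ≤ #T) :
    ∑ i ∈ S, f i ≤ ∑ i ∈ T, f i := by
  rcases (S \ T).eq_empty_or_nonempty with hS | hS
  · exact sum_le_sum_of_subset_of_nonneg (sdiff_eq_empty_iff_subset.mp hS) fun i _ _ ↦ hf i
  obtain ⟨j, hj, hjc⟩ := (S \ T).exists_mem_eq_sup' hS f
  set c := (S \ T).sup' hS f
  calc ∑ i ∈ S, f i = ∑ i ∈ S ∩ T, f i + ∑ i ∈ S \ T, f i := (sum_inter_add_sum_sdiff _ _ _).symm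
    _ ≤ ∑ i ∈ T ∩ S, f i + #(T \ S) • c := by
        rw [inter_comm]
        gcongr
        calc ∑ i ∈ S \ T, f i ≤ #(S \ T) • c := sum_le_card_nsmul _ _ _ fun i hi ↦ le_sup' f hi
          _ ≤ #(T \ S) • c :=
            nsmul_le_nsmul_left (hjc ▸ hf j) (card_sdiff_le_card_sdiff_iff.mpr hST)
    _ ≤ ∑ i ∈ T ∩ S, f i + ∑ i ∈ T \ S, f i := by
        gcongr
        exact card_nsmul_le_sum _ _ _ fun i hi ↦
          hjc ▸ hT i (mem_sdiff.mp hi).1 j (mem_sdiff.mp hj).2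
    _ = ∑ i ∈ T, f i := sum_inter_add_sum_sdiff _ _ _

end Finset

variable {ι : Type*} [Fintype ι] [DecidableEq ι]

theorem sum_compl_abs_le_sum_abs_sub_of_card_support_le {v w : ι → ℝ} {T : Finset ι}
    (hT : ∀ i ∈ T, ∀ j ∉ T, |v j| ≤ |v i|) (hw : #{i | w i ≠ 0} ≤ #T) :
    ∑ i ∈ Tᶜ, |v i| ≤ ∑ i, |w i - v i| := by
  set S : Finset ι := {i | w i ≠ 0}
  have hS : ∑ i ∈ S, |v i| ≤ ∑ i ∈ T, |v i| :=
    sum_le_sum_of_card_le_of_forall_le (fun i ↦ abs_nonneg (v i)) hT hw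
  have hoff : ∑ i ∈ Sᶜ, |w i - v i| = ∑ i ∈ Sᶜ, |v i| := by
    refine sum_congr rfl fun i hi ↦ ?_
    rw [show w i = 0 by simpa [S] using hi, zero_sub, abs_neg]
  have hon : 0 ≤ ∑ i ∈ S, |w i - v i| := sum_nonneg fun i _ ↦ abs_nonneg _
  rw [← sum_add_sum_compl S fun i ↦ |w i - v i|, hoff]
  linarith [sum_add_sum_compl S fun i ↦ |v i|, sum_add_sum_compl T fun i ↦ |v i|]

theorem sum_abs_sub_sub_two_mul_sum_le (v v' : ι → ℝ) (T : Finset ι) :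
    ∑ i, |v' i - v i| - 2 * ∑ i ∈ T, |v' i - v i| ≤
      ∑ i, |v' i| - ∑ i, |v i| + 2 * ∑ i ∈ Tᶜ, |v i| := by
  have hT : ∑ i ∈ T, (|v i| - |v' i|) ≤ ∑ i ∈ T, |v' i - v i| :=
    sum_le_sum fun i _ ↦ abs_sub_comm (v' i) (v i) ▸ abs_sub_abs_le_abs_sub (v i) (v' i)
  have hTc : ∑ i ∈ Tᶜ, |v' i - v i| ≤ ∑ i ∈ Tᶜ, (|v' i| + |v i|) :=
    sum_le_sum fun i _ ↦ abs_sub (v' i) (v i)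
  rw [sum_sub_distrib] at hT
  rw [sum_add_distrib] at hTc
  linarith [sum_add_sum_compl T fun i ↦ |v' i - v i|, sum_add_sum_compl T fun i ↦ |v' i|,
    sum_add_sum_compl T fun i ↦ |v i|]

theorem stmt_0_general (N r : ℕ) (v : Fin N → ℝ)
    (T : Finset (Fin N)) (hTcard : T.card = r)
    (hTmax : ∀ i ∈ T, ∀ j ∉ T, |v j| ≤ |v i|)
    (v' : Fin N → ℝ) :
    (∑ t, |v' t - v t|) - 2 * (∑ t ∈ T, |v' t - v t|) ≤
      (∑ t, |v' t|) - (∑ t, |v t|) +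
        2 * sInf {c : ℝ | ∃ w : Fin N → ℝ,
          (Finset.univ.filter (fun t => w t ≠ 0)).card ≤ r ∧ c = ∑ t, |w t - v t|} := by
  have hbest : ∑ t ∈ Tᶜ, |v t| ≤ sInf {c : ℝ | ∃ w : Fin N → ℝ,
      (Finset.univ.filter (fun t => w t ≠ 0)).card ≤ r ∧ c = ∑ t, |w t - v t|} := by
    refine le_csInf ⟨_, 0, by simp, rfl⟩ ?_
    rintro _ ⟨w, hw, rfl⟩
    exact sum_compl_abs_le_sum_abs_sub_of_card_support_le hTmax (hTcard ▸ hw)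
  linarith [sum_abs_sub_sub_two_mul_sum_le v v' T]

/-- Lemma 1 (Lemma `First-Lem`): for any `v' ∈ ℝ^N`,
`‖v'−v‖₁ − 2‖(v'−v)_{T_r(v)}‖₁ ≤ ‖v'‖₁ − ‖v‖₁ + 2 inf_{w ∈ S_r} ‖w−v‖₁`. -/
theorem stmt_0 (N r : ℕ) (hr : r ≤ N) (v : Fin N → ℝ)
    (T : Finset (Fin N)) (hTcard : T.card = r)
    (hTmax : ∀ i ∈ T, ∀ j ∉ T, |v j| ≤ |v i|)
    (v' : Fin N → ℝ) :
    (∑ t, |v' t - v t|) - 2 * (∑ t ∈ T, |v' t - v t|) ≤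
      (∑ t, |v' t|) - (∑ t, |v t|) +
        2 * sInf {c : ℝ | ∃ w : Fin N → ℝ,
          (Finset.univ.filter (fun t => w t ≠ 0)).card ≤ r ∧ c = ∑ t, |w t - v t|} :=
  stmt_0_general N r v T hTcard hTmax v'
end

section
/- Let φ : ℝ^{n×s} → ℝ^N, let J(A) = ‖φ(A)‖₁, let δ_r(A) = inf{‖φ(A) − w‖₁ : w ∈ ℝ^N, ‖w‖₀ ≤ r}, and let ξ_r be the r-th concentration ratio of φ. If ξ_r < 1/2, then for all A, A' ∈ ℝ^{n×s}: ‖φ(A') − φ(A)‖₁ ≤ (1/(1 − 2ξ_r))·(J(A') − J(A) + 2δ_r(A)). -/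
/-!
For a vector `w` supported on a set `T` of at most `r` indices, split every ℓ¹ sum over `T` and
its complement. With `h = φ(A') - φ(A)`, the triangle inequality gives `|φ(A)| ≤ |φ(A')| + |h|` on
`T` and `|h| ≤ |φ(A')| + |φ(A)|` off `T`, hence
`‖h‖₁ ≤ J(A') - J(A) + 2 ‖φ(A) - w‖₁ + 2 ∑_{t ∈ T} |h t|`.
The last sum is at most `ξ_r ‖h‖₁` by definition of the concentration ratio; moving it to the left
and taking the infimum over `w` gives the inequality.
-/

open Finset

/-- The `r`-th concentration ratio of a map `φ : ℝ^{n×s} → ℝ^N`. -/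
noncomputable def xi {n s N : ℕ} (φ : Matrix (Fin n) (Fin s) ℝ → (Fin N → ℝ)) (r : ℕ) : ℝ :=
  sSup {c : ℝ | ∃ A A' : Matrix (Fin n) (Fin s) ℝ, ∃ T : Finset (Fin N),
    φ A ≠ φ A' ∧ T.card ≤ r ∧
    c = (∑ t ∈ T, |φ A t - φ A' t|) / (∑ t, |φ A t - φ A' t|)}

/-- The cost `J(A) = ‖φ(A)‖₁`. -/
noncomputable def Jcost {n s N : ℕ} (φ : Matrix (Fin n) (Fin s) ℝ → (Fin N → ℝ))
    (A : Matrix (Fin n) (Fin s) ℝ) : ℝ :=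
  ∑ t, |φ A t|

/-- `δ_r(A)`: the ℓ¹ distance from `φ(A)` to the set of `r`-sparse vectors. -/
noncomputable def deltaR {n s N : ℕ} (φ : Matrix (Fin n) (Fin s) ℝ → (Fin N → ℝ))
    (r : ℕ) (A : Matrix (Fin n) (Fin s) ℝ) : ℝ :=
  sInf {c : ℝ | ∃ w : Fin N → ℝ,
    (Finset.univ.filter (fun t => w t ≠ 0)).card ≤ r ∧ c = ∑ t, |φ A t - w t|}

theorem sum_norm_sub_le_of_eq_zero_off {ι E : Type*} [Fintype ι] [DecidableEq ι]
    [SeminormedAddCommGroup E] (x y w : ι → E) (T : Finset ι) (hw : ∀ i ∉ T, w i = 0) :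
    ∑ i, ‖y i - x i‖ ≤
      ∑ i, ‖y i‖ - ∑ i, ‖x i‖ + 2 * ∑ i, ‖x i - w i‖ + 2 * ∑ i ∈ T, ‖y i - x i‖ := by
  have on_T : ∑ i ∈ T, ‖x i‖ ≤ ∑ i ∈ T, ‖y i‖ + ∑ i ∈ T, ‖y i - x i‖ := by
    rw [← sum_add_distrib]
    exact sum_le_sum fun i _ => norm_le_norm_add_norm_sub (y i) (x i)
  have off_T : ∑ i ∈ Tᶜ, ‖y i - x i‖ ≤ ∑ i ∈ Tᶜ, ‖y i‖ + ∑ i ∈ Tᶜ, ‖x i‖ := by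
    rw [← sum_add_distrib]
    exact sum_le_sum fun i _ => norm_sub_le (y i) (x i)
  have off_T_eq : ∑ i ∈ Tᶜ, ‖x i‖ = ∑ i ∈ Tᶜ, ‖x i - w i‖ :=
    sum_congr rfl fun i hi => by rw [hw i (mem_compl.mp hi), sub_zero]
  have off_T_le : ∑ i ∈ Tᶜ, ‖x i - w i‖ ≤ ∑ i, ‖x i - w i‖ :=
    sum_le_univ_sum_of_nonneg fun i => norm_nonneg _
  rw [← sum_add_sum_compl T fun i => ‖y i - x i‖, ← sum_add_sum_compl T fun i => ‖y i‖,
    ← sum_add_sum_compl T fun i => ‖x i‖]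
  linarith

theorem sum_abs_sub_le_xi_mul {n s N : ℕ} (φ : Matrix (Fin n) (Fin s) ℝ → (Fin N → ℝ)) (r : ℕ)
    (A A' : Matrix (Fin n) (Fin s) ℝ) {T : Finset (Fin N)} (hT : T.card ≤ r) :
    ∑ t ∈ T, |φ A t - φ A' t| ≤ xi φ r * ∑ t, |φ A t - φ A' t| := by
  have restrict_le : ∀ (B B' : Matrix (Fin n) (Fin s) ℝ) (S : Finset (Fin N)),
      ∑ t ∈ S, |φ B t - φ B' t| ≤ ∑ t, |φ B t - φ B' t| := fun _ _ _ =>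
    sum_le_univ_sum_of_nonneg fun _ => abs_nonneg _
  by_cases hne : φ A = φ A'
  · simp [hne]
  have hpos : 0 < ∑ t, |φ A t - φ A' t| := by
    obtain ⟨t, ht⟩ := Function.ne_iff.mp hne
    exact sum_pos' (fun _ _ => abs_nonneg _) ⟨t, mem_univ t, abs_pos.mpr (sub_ne_zero.mpr ht)⟩
  have bdd : BddAbove {c : ℝ | ∃ A A' : Matrix (Fin n) (Fin s) ℝ, ∃ T : Finset (Fin N),
      φ A ≠ φ A' ∧ T.card ≤ r ∧
      c = (∑ t ∈ T, |φ A t - φ A' t|) / (∑ t, |φ A t - φ A' t|)} := by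
    refine ⟨1, ?_⟩
    rintro c ⟨B, B', S, -, -, rfl⟩
    exact div_le_one_of_le₀ (restrict_le B B' S) (sum_nonneg fun _ _ => abs_nonneg _)
  rw [← div_le_iff₀ hpos]
  exact le_csSup bdd ⟨A, A', T, hne, hT, rfl⟩

theorem le_deltaR {n s N : ℕ} (φ : Matrix (Fin n) (Fin s) ℝ → (Fin N → ℝ)) (r : ℕ)
    (A : Matrix (Fin n) (Fin s) ℝ) {c : ℝ}
    (h : ∀ w : Fin N → ℝ, (univ.filter fun t => w t ≠ 0).card ≤ r → c ≤ ∑ t, |φ A t - w t|) :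
    c ≤ deltaR φ r A := by
  refine le_csInf ⟨_, 0, by simp, rfl⟩ ?_
  rintro _ ⟨w, hw, rfl⟩
  exact h w hw

/-- Fundamental inequality (Lemma `INEQ`): if `ξ_r < 1/2` then
`‖φ(A')−φ(A)‖₁ ≤ (J(A')−J(A)+2δ_r(A))/(1−2ξ_r)` for all `A, A'`. -/
theorem stmt_4 {n s N : ℕ} (φ : Matrix (Fin n) (Fin s) ℝ → (Fin N → ℝ))
    (r : ℕ) (hxi : xi φ r < 1 / 2)
    (A A' : Matrix (Fin n) (Fin s) ℝ) :
    (∑ t, |φ A' t - φ A t|) ≤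
      (1 / (1 - 2 * xi φ r)) * (Jcost φ A' - Jcost φ A + 2 * deltaR φ r A) := by
  set D := ∑ t, |φ A' t - φ A t|
  have hδ : ((1 - 2 * xi φ r) * D - (Jcost φ A' - Jcost φ A)) / 2 ≤ deltaR φ r A := by
    refine le_deltaR φ r A fun w hw => ?_
    have split := sum_norm_sub_le_of_eq_zero_off (φ A) (φ A') w
      (univ.filter fun t => w t ≠ 0) (by simp)
    have concentrated := sum_abs_sub_le_xi_mul φ r A' A hw
    simp only [Real.norm_eq_abs] at split
    unfold Jcost
    linarith
  rw [one_div_mul_eq_div, le_div_iff₀ (by linarith)]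
  linarith
end

section
/- Data setting: given points (x_t, y_t) ∈ ℝ^n × ℝ for t ∈ {1,...,N}, for each A = [a_1,...,a_s] ∈ ℝ^{n×s} let σ_A : {1,...,N} → {1,...,s} satisfy σ_A(t) ∈ argmin_i |y_t − x_tᵀa_i|, let I_i(A) = {t : σ_A(t) = i}, and let φ(A) ∈ ℝ^N have entries y_t − x_tᵀa_{σ_A(t)}. Let X = [x_1,...,x_N] and ν_n(X) its n-genericity index. Claim: if à = [ã_1,...,ã_s] has pairwise distinct columns and min_i |I_i(Ã)| ≥ s·ν_n(X), then for any A ∈ ℝ^{n×s}, φ(A) = φ(Ã) implies that the set of columns of A equals the set of columns of Ã. -/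
/-!
The `s·ν` samples of `I_i(Ã)` are distributed among the `s` sets `I_j(A)`, so by pigeonhole
some `I_j(A)` contains `ν` of them. On these samples `φ(A) = φ(Ã)` says that `a_j` and `ã_i`
make the same predictions, and since any `ν` regressors span `ℝⁿ`, `a_j = ã_i`. The resulting
map `i ↦ j` is injective because the `ã_i` are distinct, hence bijective.
-/

open Finset Matrix

theorem Matrix.eq_zero_of_vecMul_eq_zero_of_rank_eq_card {K m ι : Type*} [Field K] [Fintype m]
    [Fintype ι] {M : Matrix m ι K} (hM : M.rank = Fintype.card m) {v : m → K}
    (hv : v ᵥ* M = 0) : v = 0 := by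
  have hrows : LinearIndependent K M.row := by
    rw [linearIndependent_iff_card_eq_finrank_span, Set.finrank, ← rank_eq_finrank_span_row, hM]
  funext i
  exact Fintype.linearIndependent_iff.mp hrows v (by rw [← hv, vecMul_eq_sum]; rfl) i

theorem Matrix.eq_of_vecMul_eq_on_of_rank_submatrix {K m ι : Type*} [Field K] [Fintype m]
    [Fintype ι] (X : Matrix m ι K) (ν : ℕ)
    (hν : ∀ S : Finset ι, S.card = ν →
      (X.submatrix id (fun j : {t // t ∈ S} => j.1)).rank = Fintype.card m)
    {T : Finset ι} (hT : ν ≤ T.card) {a b : m → K} (hab : ∀ t ∈ T, (a ᵥ* X) t = (b ᵥ* X) t) :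
    a = b := by
  obtain ⟨S, hST, rfl⟩ := Finset.exists_subset_card_eq hT
  rw [← sub_eq_zero]
  refine eq_zero_of_vecMul_eq_zero_of_rank_eq_card (hν S rfl) (funext fun j => ?_)
  rw [sub_vecMul, Pi.sub_apply, Pi.zero_apply, sub_eq_zero]
  exact hab j.1 (hST j.2)

theorem Set.range_eq_of_comp_eq {α β : Type*} [Finite α] {u v : α → β} {f : α → α}
    (hv : v.Injective) (h : u ∘ f = v) : Set.range u = Set.range v := by
  have hf : f.Surjective := Finite.surjective_of_injective (h ▸ hv).of_comp
  rw [← h, hf.range_comp]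

theorem stmt_9_general (n s N : ℕ)
    (x : Fin N → Fin n → ℝ) (y : Fin N → ℝ)
    -- `σ A` is a switching signal satisfying the argmin condition for each `A`
    (σ : Matrix (Fin n) (Fin s) ℝ → Fin N → Fin s)
    -- `ν` is the `n`-genericity index of `X`
    (ν : ℕ)
    (hν : IsLeast {m : ℕ | ∀ S : Finset (Fin N), S.card = m →
        ((Matrix.of (fun k t => x t k) : Matrix (Fin n) (Fin N) ℝ).submatrix id
          (fun j : {t // t ∈ S} => j.1)).rank = n} ν)
    (Atil : Matrix (Fin n) (Fin s) ℝ)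
    -- `Ã` has pairwise distinct columns
    (hdist : ∀ i j : Fin s, (fun k => Atil k i) = (fun k => Atil k j) → i = j)
    -- `min_i |I_i(Ã)| ≥ s · ν_n(X)`
    (hcount : ∀ i : Fin s, s * ν ≤ (Finset.univ.filter (fun t => σ Atil t = i)).card)
    (A : Matrix (Fin n) (Fin s) ℝ)
    -- `φ(A) = φ(Ã)`
    (hphi : ∀ t : Fin N,
      y t - ∑ k, x t k * A k (σ A t) = y t - ∑ k, x t k * Atil k (σ Atil t)) :
    {c : Fin n → ℝ | ∃ i, c = fun k => A k i} =
      {c : Fin n → ℝ | ∃ i, c = fun k => Atil k i} := by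
  set X : Matrix (Fin n) (Fin N) ℝ := Matrix.of (fun k t => x t k)
  have hgeneric : ∀ S : Finset (Fin N), S.card = ν →
      (X.submatrix id (fun j : {t // t ∈ S} => j.1)).rank = Fintype.card (Fin n) := by
    simpa using hν.1
  have hmatch : ∀ i, ∃ j, (fun k => A k j) = fun k => Atil k i := by
    intro i
    obtain ⟨j, -, hj⟩ := exists_le_card_fiber_of_mul_le_card_of_maps_to (f := σ A)
      (fun _ _ => mem_univ _) ⟨i, mem_univ i⟩ (by simpa using hcount i)
    refine ⟨j, X.eq_of_vecMul_eq_on_of_rank_submatrix ν hgeneric hj fun t ht => ?_⟩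
    simp only [mem_filter, mem_univ, true_and] at ht
    have hpred := hphi t
    rw [ht.1, ht.2] at hpred
    simp only [vecMul, dotProduct, X, of_apply, mul_comm]
    linarith
  choose f hf using hmatch
  have hrange := Set.range_eq_of_comp_eq (u := fun j k => A k j) (v := fun i k => Atil k i)
    (f := f) (fun i i' h => hdist i i' h) (funext hf)
  ext c
  simpa only [Set.mem_ofPred_eq, Set.mem_range, eq_comm (a := c)] using Set.ext_iff.mp hrange c

/-- Injectivity lemma (Lemma `injectivity`): if `Ã` has pairwise distinct columns and
every `I_i(Ã)` has at least `s·ν_n(X)` elements, then `φ(A) = φ(Ã)` implies that the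
set of columns of `A` equals the set of columns of `Ã`. -/
theorem stmt_9 (n s N : ℕ) (hs : 0 < s)
    (x : Fin N → Fin n → ℝ) (y : Fin N → ℝ)
    -- the regressor matrix `X = [x_1 ⋯ x_N]` has full row rank
    (hrank : (Matrix.of (fun k t => x t k) : Matrix (Fin n) (Fin N) ℝ).rank = n)
    -- `σ A` is a switching signal satisfying the argmin condition for each `A`
    (σ : Matrix (Fin n) (Fin s) ℝ → Fin N → Fin s)
    (hσ : ∀ (A : Matrix (Fin n) (Fin s) ℝ) (t : Fin N) (i : Fin s),
      |y t - ∑ k, x t k * A k (σ A t)| ≤ |y t - ∑ k, x t k * A k i|)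
    -- `ν` is the `n`-genericity index of `X`
    (ν : ℕ)
    (hν : IsLeast {m : ℕ | ∀ S : Finset (Fin N), S.card = m →
        ((Matrix.of (fun k t => x t k) : Matrix (Fin n) (Fin N) ℝ).submatrix id
          (fun j : {t // t ∈ S} => j.1)).rank = n} ν)
    (Atil : Matrix (Fin n) (Fin s) ℝ)
    -- `Ã` has pairwise distinct columns
    (hdist : ∀ i j : Fin s, (fun k => Atil k i) = (fun k => Atil k j) → i = j)
    -- `min_i |I_i(Ã)| ≥ s · ν_n(X)`
    (hcount : ∀ i : Fin s, s * ν ≤ (Finset.univ.filter (fun t => σ Atil t = i)).card)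
    (A : Matrix (Fin n) (Fin s) ℝ)
    -- `φ(A) = φ(Ã)`
    (hphi : ∀ t : Fin N,
      y t - ∑ k, x t k * A k (σ A t) = y t - ∑ k, x t k * Atil k (σ Atil t)) :
    {c : Fin n → ℝ | ∃ i, c = fun k => A k i} =
      {c : Fin n → ℝ | ∃ i, c = fun k => Atil k i} :=
  stmt_9_general n s N x y σ ν hν Atil hdist hcount A hphi
end

section
/- Let f : ℝ^n → ℝ₊ be a continuous function such that (i) f(x) = 0 iff x = 0, and (ii) there exists a class-K∞ function q with f(x) ≥ q(1/λ)·f(λx) for all x ∈ ℝ^n and all λ > 0. Then for any norm ‖·‖ on ℝ^n there exists a constant α > 0 such that f(x) ≥ α·q(‖x‖) for all x ∈ ℝ^n. -/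
open Filter

/-!
A norm on a finite-dimensional space is convex, hence continuous, and it dominates a multiple of
any other norm, so its unit sphere `S` is compact and the positive continuous `f` is bounded below
on `S` by some `α > 0`. For `x ≠ 0`, relaxed homogeneity with `λ = 1 / ‖x‖` gives
`f x ≥ q ‖x‖ * f (x / ‖x‖) ≥ α * q ‖x‖`.
-/

namespace Seminorm

variable {E : Type*} [NormedAddCommGroup E] [NormedSpace ℝ E] [FiniteDimensional ℝ E]

theorem continuous_of_finiteDimensional (p : Seminorm ℝ E) : Continuous p :=
  continuousOn_univ.1 (p.convexOn.continuousOn isOpen_univ)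

theorem exists_pos_mul_norm_le (p : Seminorm ℝ E) (hp : ∀ x, p x = 0 → x = 0) :
    ∃ c > 0, ∀ x, c * ‖x‖ ≤ p x := by
  have hpos : ∀ x ∈ Metric.sphere (0 : E) 1, 0 < p x := fun x hx =>
    (apply_nonneg p x).lt_of_ne' fun h => by simp [hp x h] at hx
  obtain ⟨c, hc, hcp⟩ := (isCompact_sphere (0 : E) 1).exists_forall_le'
    p.continuous_of_finiteDimensional.continuousOn hpos
  refine ⟨c, hc, fun x => ?_⟩
  rcases eq_or_ne x 0 with rfl | hx
  · simp
  have hnx : 0 < ‖x‖ := norm_pos_iff.2 hx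
  have hcx := hcp (‖x‖⁻¹ • x) (by simp [norm_smul, hnx.ne'])
  rw [map_smul_eq_mul, norm_inv, norm_norm] at hcx
  calc c * ‖x‖ ≤ ‖x‖⁻¹ * p x * ‖x‖ := by gcongr
    _ = p x := by field_simp

theorem isCompact_setOf_eq_one (p : Seminorm ℝ E) (hp : ∀ x, p x = 0 → x = 0) :
    IsCompact {x | p x = 1} := by
  obtain ⟨c, hc, hcp⟩ := p.exists_pos_mul_norm_le hp
  refine Metric.isCompact_of_isClosed_isBounded
    (isClosed_eq p.continuous_of_finiteDimensional continuous_const)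
    ((Metric.isBounded_closedBall (x := (0 : E)) (r := c⁻¹)).subset fun x (hx : p x = 1) => ?_)
  rw [mem_closedBall_zero_iff, ← mul_one c⁻¹, le_inv_mul_iff₀ hc, ← hx]
  exact hcp x

end Seminorm

theorem exists_pos_mul_comp_seminorm_le {E : Type*} [NormedAddCommGroup E] [NormedSpace ℝ E]
    [FiniteDimensional ℝ E] {f : E → ℝ} (hf_cont : Continuous f) (hf0 : f 0 = 0)
    (hf_pos : ∀ x ≠ 0, 0 < f x) {q : ℝ → ℝ} (hq_nonneg : ∀ t, 0 ≤ t → 0 ≤ q t) (hq0 : q 0 = 0)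
    (hfq : ∀ x (lam : ℝ), 0 < lam → q (1 / lam) * f (lam • x) ≤ f x)
    (p : Seminorm ℝ E) (hp : ∀ x, p x = 0 → x = 0) :
    ∃ α > 0, ∀ x, α * q (p x) ≤ f x := by
  have hf_unit : ∀ y ∈ {x | p x = 1}, 0 < f y := fun y hy =>
    hf_pos y (by rintro rfl; simp at hy)
  obtain ⟨α, hα, hαf⟩ :=
    (p.isCompact_setOf_eq_one hp).exists_forall_le' hf_cont.continuousOn hf_unit
  refine ⟨α, hα, fun x => ?_⟩
  rcases eq_or_ne x 0 with rfl | hx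
  · simp [hq0, hf0]
  have hpx : 0 < p x := (apply_nonneg p x).lt_of_ne' (mt (hp x) hx)
  have hunit : p ((p x)⁻¹ • x) = 1 := by
    rw [map_smul_eq_mul, norm_inv, Real.norm_of_nonneg hpx.le, inv_mul_cancel₀ hpx.ne']
  calc α * q (p x) ≤ f ((p x)⁻¹ • x) * q (p x) :=
        mul_le_mul_of_nonneg_right (hαf _ hunit) (hq_nonneg _ hpx.le)
    _ ≤ f x := by simpa [mul_comm] using hfq x (p x)⁻¹ (inv_pos.2 hpx)

theorem stmt_11_general (n : ℕ) (f : (Fin n → ℝ) → ℝ)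
    (hf_cont : Continuous f) (hf_nonneg : ∀ x, 0 ≤ f x)
    (hf_zero : ∀ x, f x = 0 ↔ x = 0)
    -- `q` is a class-`K∞` function (on the nonnegative reals)
    (q : ℝ → ℝ)
    (hq_nonneg : ∀ t, 0 ≤ t → 0 ≤ q t)
    (hq0 : q 0 = 0)
    -- relaxed homogeneity: `f(x) ≥ q(1/λ) f(λx)` for all `λ > 0`
    (hfq : ∀ (x : Fin n → ℝ) (lam : ℝ), 0 < lam → q (1 / lam) * f (lam • x) ≤ f x)
    -- an arbitrary norm on `ℝ^n`
    (Nrm : (Fin n → ℝ) → ℝ)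
    (hN_add : ∀ x y, Nrm (x + y) ≤ Nrm x + Nrm y)
    (hN_smul : ∀ (c : ℝ) (x), Nrm (c • x) = |c| * Nrm x)
    (hN_zero : ∀ x, Nrm x = 0 → x = 0) :
    ∃ α : ℝ, 0 < α ∧ ∀ x, α * q (Nrm x) ≤ f x :=
  exists_pos_mul_comp_seminorm_le hf_cont ((hf_zero 0).2 rfl)
    (fun x hx => (hf_nonneg x).lt_of_ne' (mt (hf_zero x).1 hx)) hq_nonneg hq0 hfq
    (Seminorm.of Nrm hN_add hN_smul) hN_zero

/-- Lemma `minimum-value`: if `f : ℝ^n → ℝ₊` is continuous, positive definite and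
relaxedly homogeneous with respect to a class-`K∞` function `q`, then for any norm
`‖·‖` on `ℝ^n` there is `α > 0` with `f(x) ≥ α · q(‖x‖)`. -/
theorem stmt_11 (n : ℕ) (f : (Fin n → ℝ) → ℝ)
    (hf_cont : Continuous f) (hf_nonneg : ∀ x, 0 ≤ f x)
    (hf_zero : ∀ x, f x = 0 ↔ x = 0)
    -- `q` is a class-`K∞` function (on the nonnegative reals)
    (q : ℝ → ℝ)
    (hq_nonneg : ∀ t, 0 ≤ t → 0 ≤ q t)
    (hq_cont : ContinuousOn q (Set.Ici 0)) (hq0 : q 0 = 0)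
    (hq_mono : StrictMonoOn q (Set.Ici 0))
    (hq_top : Tendsto q atTop atTop)
    -- relaxed homogeneity: `f(x) ≥ q(1/λ) f(λx)` for all `λ > 0`
    (hfq : ∀ (x : Fin n → ℝ) (lam : ℝ), 0 < lam → q (1 / lam) * f (lam • x) ≤ f x)
    -- an arbitrary norm on `ℝ^n`
    (Nrm : (Fin n → ℝ) → ℝ)
    (hN_add : ∀ x y, Nrm (x + y) ≤ Nrm x + Nrm y)
    (hN_smul : ∀ (c : ℝ) (x), Nrm (c • x) = |c| * Nrm x)
    (hN_zero : ∀ x, Nrm x = 0 → x = 0) :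
    ∃ α : ℝ, 0 < α ∧ ∀ x, α * q (Nrm x) ≤ f x :=
  stmt_11_general n f hf_cont hf_nonneg hf_zero q hq_nonneg hq0 hfq Nrm hN_add hN_smul hN_zero
end

section
/- Two-mode special case of comparability: let {I_1, I_2} and {I'_1, I'_2} be partitions of {1,...,N} with |I_1| ≥ 2m and |I_2| ≥ 2m for a positive integer m. If N ≥ 4m + | |I'_1| − |I'_2| |, then there exists a permutation π of {1,2} with |I_1 ∩ I'_{π(1)}| ≥ m and |I_2 ∩ I'_{π(2)}| ≥ m. -/
/-!
Write `a, b, c, d` for the sizes of `I₁ ∩ I'₁, I₁ ∩ I'₂, I₂ ∩ I'₁, I₂ ∩ I'₂`. The hypothesis on `N`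
says exactly that both column sums `a + c = |I'₁|` and `b + d = |I'₂|` are at least `2m`, and the
row sums are at least `2m` by assumption. In such a `2 × 2` table, if one diagonal has an entry
below `m`, the row and column through that entry force both entries of the other diagonal above `m`.
-/

open Finset

theorem card_inter_add_card_inter_of_subset_union {α : Type*} [DecidableEq α]
    {s t₁ t₂ : Finset α} (hd : Disjoint t₁ t₂) (hs : s ⊆ t₁ ∪ t₂) :
    #(s ∩ t₁) + #(s ∩ t₂) = #s := by
  rw [← card_union_of_disjoint (hd.mono inter_subset_right inter_subset_right),
    ← inter_union_distrib_left, inter_eq_left.mpr hs]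

theorem le_and_le_of_two_mul_add_abs_sub_le {α : Type*} [CommRing α] [LinearOrder α]
    [IsStrictOrderedRing α] {x y k : α} (h : 2 * k + |x - y| ≤ x + y) : k ≤ x ∧ k ≤ y := by
  have := le_abs_self (x - y)
  have := neg_abs_le (x - y)
  constructor <;> linarith

theorem diag_or_antidiag_of_line_sums_ge {a b c d m : ℕ}
    (hab : 2 * m ≤ a + b) (hcd : 2 * m ≤ c + d) (hac : 2 * m ≤ a + c) (hbd : 2 * m ≤ b + d) :
    (m ≤ a ∧ m ≤ d) ∨ (m ≤ b ∧ m ≤ c) := by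
  omega

theorem stmt_18_general (N m : ℕ)
    (I1 I2 I1' I2' : Finset (Fin N))
    (hId : Disjoint I1 I2) (hIu : I1 ∪ I2 = Finset.univ)
    (hI'd : Disjoint I1' I2') (hI'u : I1' ∪ I2' = Finset.univ)
    (h1 : 2 * m ≤ I1.card) (h2 : 2 * m ≤ I2.card)
    (hN : (4 * m : ℤ) + |(I1'.card : ℤ) - (I2'.card : ℤ)| ≤ (N : ℤ)) :
    (m ≤ (I1 ∩ I1').card ∧ m ≤ (I2 ∩ I2').card) ∨
    (m ≤ (I1 ∩ I2').card ∧ m ≤ (I2 ∩ I1').card) := by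
  have row (s : Finset (Fin N)) : #(s ∩ I1') + #(s ∩ I2') = #s :=
    card_inter_add_card_inter_of_subset_union hI'd (hI'u ▸ subset_univ s)
  have col (s : Finset (Fin N)) : #(I1 ∩ s) + #(I2 ∩ s) = #s := by
    rw [inter_comm I1, inter_comm I2]
    exact card_inter_add_card_inter_of_subset_union hId (hIu ▸ subset_univ s)
  have hcard' : #I1' + #I2' = N := by
    rw [← card_union_of_disjoint hI'd, hI'u, card_univ, Fintype.card_fin]
  obtain ⟨hcol1, hcol2⟩ : (2 * m : ℤ) ≤ #I1' ∧ (2 * m : ℤ) ≤ #I2' := by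
    apply le_and_le_of_two_mul_add_abs_sub_le
    rw [← Nat.cast_add, hcard']
    linarith
  rw [← col I1'] at hcol1
  rw [← col I2'] at hcol2
  exact diag_or_antidiag_of_line_sums_ge (row I1 ▸ h1) (row I2 ▸ h2) (by omega) (by omega)

/-- Two-mode comparability: if `{I_1,I_2}` and `{I'_1,I'_2}` partition `{1,…,N}`,
`|I_1|, |I_2| ≥ 2m` and `N ≥ 4m + ||I'_1| − |I'_2||`, then some permutation `π` of
`{1,2}` satisfies `|I_1 ∩ I'_{π(1)}| ≥ m` and `|I_2 ∩ I'_{π(2)}| ≥ m`. -/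
theorem stmt_18 (N m : ℕ) (hm : 0 < m)
    (I1 I2 I1' I2' : Finset (Fin N))
    (hId : Disjoint I1 I2) (hIu : I1 ∪ I2 = Finset.univ)
    (hI'd : Disjoint I1' I2') (hI'u : I1' ∪ I2' = Finset.univ)
    (h1 : 2 * m ≤ I1.card) (h2 : 2 * m ≤ I2.card)
    (hN : (4 * m : ℤ) + |(I1'.card : ℤ) - (I2'.card : ℤ)| ≤ (N : ℤ)) :
    (m ≤ (I1 ∩ I1').card ∧ m ≤ (I2 ∩ I2').card) ∨
    (m ≤ (I1 ∩ I2').card ∧ m ≤ (I2 ∩ I1').card) :=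
  stmt_18_general N m I1 I2 I1' I2' hId hIu hI'd hI'u h1 h2 hN
end
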